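/- arXiv:1608.06705 — 2 statements merged into one kernel-verified Lean document; each statement's English description precedes it below -/
import Mathlib

section
/- The Siegel function g_v(τ) has neither zeros nor poles on the upper half-plane: for every v ∈ ℚ² \ ℤ² and every τ with Im(τ) > 0, g_v(τ) ≠ 0. -/
/-!
Every factor of `g_v(τ)` other than the constant and the power of `q` has the form
`1 - e^{2πi(rτ + s)}` with `(r, s) ≡ ±v (mod ℤ²)`. It vanishes only if `rτ + s ∈ ℤ`, which for
`Im τ > 0` means `r = 0` and `s ∈ ℤ`, i.e. `v ∈ ℤ²`. The tail factors are `1 - w_n` with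
`|w_n| = O(|q|^n)` and `|q| < 1`, so both infinite products converge absolutely, and an
absolutely convergent product of nonzero factors is nonzero.
-/

noncomputable section

open Complex

/-- `e(z) = exp(2πiz)`. -/
def ec (z : ℂ) : ℂ := Complex.exp (2 * Real.pi * Complex.I * z)

/-- The Weierstrass ℘-function of the lattice `ℤτ + ℤ`. -/
def wp (τ z : ℂ) : ℂ :=
  z⁻¹ ^ 2 + ∑' p : ℤ × ℤ,
    if p = 0 then 0
    else ((z - ((p.1 : ℂ) * τ + (p.2 : ℂ)))⁻¹ ^ 2 - ((p.1 : ℂ) * τ + (p.2 : ℂ))⁻¹ ^ 2)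

/-- The lattice invariant `g₂` of `ℤτ + ℤ`. -/
def g2 (τ : ℂ) : ℂ := 60 * ∑' p : ℤ × ℤ, if p = 0 then 0 else ((p.1 : ℂ) * τ + (p.2 : ℂ))⁻¹ ^ 4

/-- The lattice invariant `g₃` of `ℤτ + ℤ`. -/
def g3 (τ : ℂ) : ℂ := 140 * ∑' p : ℤ × ℤ, if p = 0 then 0 else ((p.1 : ℂ) * τ + (p.2 : ℂ))⁻¹ ^ 6

/-- The discriminant `Δ = g₂³ − 27 g₃²`. -/
def disc (τ : ℂ) : ℂ := g2 τ ^ 3 - 27 * g3 τ ^ 2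

/-- The modular `j`-invariant `j = 1728 g₂³/Δ`. -/
def jInv (τ : ℂ) : ℂ := 1728 * g2 τ ^ 3 / disc τ

/-- The (first) Fricke function `f_v(τ) = (g₂g₃/Δ)·℘(r₁τ + r₂)`. -/
def fricke (v : ℚ × ℚ) (τ : ℂ) : ℂ :=
  g2 τ * g3 τ / disc τ * wp τ ((v.1 : ℂ) * τ + (v.2 : ℂ))

/-- `q^r = exp(2πirτ)` for rational exponents `r`. -/
def qpow (τ : ℂ) (r : ℚ) : ℂ := Complex.exp (2 * Real.pi * Complex.I * (r : ℂ) * τ)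

/-- The Siegel function `g_v(τ)`. -/
def siegel (v : ℚ × ℚ) (τ : ℂ) : ℂ :=
  -Complex.exp (Real.pi * Complex.I * (v.2 : ℂ) * ((v.1 : ℂ) - 1)) *
    qpow τ ((1/2) * (v.1 ^ 2 - v.1 + 1/6)) *
    (1 - qpow τ v.1 * ec (v.2 : ℂ)) *
    ∏' n : ℕ,
      ((1 - qpow τ ((n : ℚ) + 1 + v.1) * ec (v.2 : ℂ)) *
       (1 - qpow τ ((n : ℚ) + 1 - v.1) * ec (-(v.2 : ℂ))))

/-- A rational number is integral if it is (the image of) an integer. -/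
def IsIntegralRat (r : ℚ) : Prop := ∃ n : ℤ, r = n

/-- `u ≡ v (mod ℤ²)`. -/
def CongModZ2 (u v : ℚ × ℚ) : Prop := IsIntegralRat (u.1 - v.1) ∧ IsIntegralRat (u.2 - v.2)

lemma qpow_add (τ : ℂ) (r s : ℚ) : qpow τ (r + s) = qpow τ r * qpow τ s := by
  rw [qpow, qpow, qpow, ← Complex.exp_add]
  push_cast
  ring_nf

lemma qpow_natCast (τ : ℂ) (n : ℕ) : qpow τ n = qpow τ 1 ^ n := by
  rw [qpow, qpow, ← Complex.exp_nat_mul]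
  push_cast
  ring_nf

lemma norm_qpow_one_lt_one {τ : ℂ} (hτ : 0 < τ.im) : ‖qpow τ 1‖ < 1 := by
  rw [qpow, Complex.norm_exp, Real.exp_lt_one_iff]
  simpa using mul_pos Real.two_pi_pos hτ

lemma qpow_mul_ec (τ : ℂ) (r s : ℚ) :
    qpow τ r * ec s = Complex.exp (2 * Real.pi * Complex.I * (r * τ + s)) := by
  rw [qpow, ec, ← Complex.exp_add]
  ring_nf

lemma eq_zero_and_isIntegralRat_of_qpow_mul_ec_eq_one {τ : ℂ} (hτ : 0 < τ.im) {r s : ℚ}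
    (h : qpow τ r * ec s = 1) : r = 0 ∧ IsIntegralRat s := by
  -- `rτ + s ∈ ℤ`, and taking imaginary parts with `Im τ > 0` forces `r = 0`
  obtain ⟨m, hm⟩ := Complex.exp_eq_one_iff.mp ((qpow_mul_ec τ r s).symm.trans h)
  have hint : (r : ℂ) * τ + s = m := by
    have h2πI : 2 * (Real.pi : ℂ) * Complex.I ≠ 0 := by simp [Real.pi_ne_zero]
    exact mul_left_cancel₀ h2πI (by rw [hm]; ring)
  have hr : r = 0 := by
    have him := congrArg Complex.im hint
    simp only [Complex.add_im, Complex.mul_im, Complex.ratCast_re, Complex.ratCast_im,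
      Complex.intCast_im, zero_mul, add_zero] at him
    exact_mod_cast (mul_eq_zero.mp him).resolve_right hτ.ne'
  refine ⟨hr, m, ?_⟩
  exact_mod_cast (by simpa [hr] using hint : (s : ℂ) = m)

lemma one_sub_qpow_intCast_add_mul_ec_ne_zero {τ : ℂ} (hτ : 0 < τ.im) {r s : ℚ}
    (hrs : ¬(IsIntegralRat r ∧ IsIntegralRat s)) (k : ℤ) :
    1 - qpow τ (k + r) * ec s ≠ 0 := by
  intro h
  obtain ⟨hkr, hs⟩ := eq_zero_and_isIntegralRat_of_qpow_mul_ec_eq_one hτ (sub_eq_zero.mp h).symm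
  exact hrs ⟨⟨-k, by push_cast; linarith⟩, hs⟩

lemma summable_norm_qpow_mul_ec {τ : ℂ} (hτ : 0 < τ.im) (r s : ℚ) :
    Summable fun n : ℕ => ‖qpow τ (n + 1 + r) * ec s‖ := by
  have hgeom := (summable_geometric_of_lt_one (norm_nonneg _) (norm_qpow_one_lt_one hτ)).mul_right
    ‖qpow τ (1 + r) * ec s‖
  refine hgeom.congr fun n => ?_
  rw [add_assoc, qpow_add τ n, qpow_natCast, mul_assoc, norm_mul (_ ^ n), norm_pow]

lemma multipliable_one_sub_qpow_mul_ec {τ : ℂ} (hτ : 0 < τ.im) (r s : ℚ) :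
    Multipliable fun n : ℕ => 1 - qpow τ (n + 1 + r) * ec s := by
  simpa only [sub_eq_add_neg] using
    multipliable_one_add_of_summable (by simpa using summable_norm_qpow_mul_ec hτ r s)

lemma tprod_one_sub_qpow_mul_ec_ne_zero {τ : ℂ} (hτ : 0 < τ.im) {r s : ℚ}
    (hrs : ¬(IsIntegralRat r ∧ IsIntegralRat s)) :
    ∏' n : ℕ, (1 - qpow τ (n + 1 + r) * ec s) ≠ 0 := by
  simp only [sub_eq_add_neg]
  refine tprod_one_add_ne_zero_of_summable (fun n => ?_)
    (by simpa using summable_norm_qpow_mul_ec hτ r s)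
  simpa [sub_eq_add_neg] using one_sub_qpow_intCast_add_mul_ec_ne_zero hτ hrs (n + 1)

lemma isIntegralRat_neg_iff {r : ℚ} : IsIntegralRat (-r) ↔ IsIntegralRat r :=
  ⟨fun ⟨m, hm⟩ => ⟨-m, by push_cast; linarith⟩, fun ⟨m, hm⟩ => ⟨-m, by push_cast; linarith⟩⟩

/-- the Siegel function has neither zeros nor poles on the upper half-plane:
for every `v ∈ ℚ² ∖ ℤ²` and every `τ` with `Im τ > 0`, `g_v(τ) ≠ 0`. -/
theorem siegel_ne_zero (v : ℚ × ℚ)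
    (hv : ¬(IsIntegralRat v.1 ∧ IsIntegralRat v.2)) :
    ∀ τ : ℂ, 0 < τ.im → siegel v τ ≠ 0 := by
  intro τ hτ
  have hv' : ¬(IsIntegralRat (-v.1) ∧ IsIntegralRat (-v.2)) := by
    simpa only [isIntegralRat_neg_iff] using hv
  have hfirst : 1 - qpow τ v.1 * ec v.2 ≠ 0 := by
    simpa using one_sub_qpow_intCast_add_mul_ec_ne_zero hτ hv 0
  have htail : ∏' n : ℕ, ((1 - qpow τ (n + 1 + v.1) * ec v.2) *
      (1 - qpow τ (n + 1 - v.1) * ec (-v.2))) ≠ 0 := by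
    have hneg : ∀ n : ℕ,
        qpow τ (n + 1 - v.1) * ec (-v.2) = qpow τ (n + 1 + -v.1) * ec ↑(-v.2) := by
      intro n
      push_cast
      ring_nf
    simp only [hneg]
    rw [(multipliable_one_sub_qpow_mul_ec hτ _ _).tprod_mul
      (multipliable_one_sub_qpow_mul_ec hτ _ _)]
    exact mul_ne_zero (tprod_one_sub_qpow_mul_ec_ne_zero hτ hv)
      (tprod_one_sub_qpow_mul_ec_ne_zero hτ hv')
  rw [siegel]
  exact mul_ne_zero (mul_ne_zero (mul_ne_zero (neg_ne_zero.mpr (Complex.exp_ne_zero _))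
    (Complex.exp_ne_zero _)) hfirst) htail
end
end

section
/- Suppose N > 1 is an integer with N ∉ {2, 3, 4, 6} and gcd(72, N) ∈ {2, 3, 4, 6, 12, 18, 24, 36}. Then there exists an integer t with gcd(N, t) = 1 and t ≢ ±1 (mod N) such that, writing N₊ and N₋ for the denominators of (t+1)/N and (t−1)/N in lowest terms, there exist prime factors p₊ and p₋ of N (not necessarily distinct) with gcd(p₊, N₊) = 1 and gcd(p₋, N₋) = 1. -/
/-!
Write `N = A * B` with `A, B ≥ 3` coprime and take `t ≡ -1 (mod A)`, `t ≡ 1 (mod B)`; from a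
Bézout relation `u A + v B = 1` one can take `t = u A - v B`. The denominator of `(t + 1) / N`
then divides `B` and that of `(t - 1) / N` divides `A`, so any prime factor of `A`, resp. `B`,
is coprime to it. The condition on `gcd(72, N)` leaves one further shape, `N = 2 A` with `A` odd
and `A ≥ 5`; there `t = A + 2` makes both `t ± 1` even, so both denominators divide `A` and
`p₊ = p₋ = 2`.
-/

def Admissible (N : ℕ) (t : ℤ) : Prop :=
  Int.gcd (N : ℤ) t = 1 ∧ ¬(t ≡ 1 [ZMOD (N : ℤ)]) ∧ ¬(t ≡ -1 [ZMOD (N : ℤ)]) ∧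
    (∃ p : ℕ, p.Prime ∧ p ∣ N ∧ Nat.Coprime p (((t : ℚ) + 1) / (N : ℚ)).den) ∧
    (∃ p : ℕ, p.Prime ∧ p ∣ N ∧ Nat.Coprime p (((t : ℚ) - 1) / (N : ℚ)).den)

theorem Rat.den_intCast_div_natCast_mul_dvd {d : ℕ} {a : ℤ} (m : ℕ) (ha : (d : ℤ) ∣ a) :
    ((a : ℚ) / ((d * m : ℕ) : ℚ)).den ∣ m := by
  obtain ⟨c, rfl⟩ := ha
  rcases eq_or_ne d 0 with rfl | hd
  · simp
  have hcancel : ((d * c : ℤ) : ℚ) / ((d * m : ℕ) : ℚ) = (c : ℚ) / ((m : ℤ) : ℚ) := by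
    push_cast
    exact mul_div_mul_left _ _ (by exact_mod_cast hd)
  rw [hcancel, Rat.intCast_div_eq_divInt]
  exact_mod_cast Rat.den_dvd c m

theorem exists_prime_dvd_coprime_den {N d m : ℕ} {a : ℤ} (hN : d * m = N) (hd : 1 < d)
    (hdm : d.Coprime m) (ha : (d : ℤ) ∣ a) :
    ∃ p : ℕ, p.Prime ∧ p ∣ N ∧ p.Coprime ((a : ℚ) / (N : ℚ)).den := by
  subst hN
  refine ⟨d.minFac, Nat.minFac_prime hd.ne', d.minFac_dvd.mul_right m, ?_⟩
  exact (hdm.coprime_dvd_left d.minFac_dvd).coprime_dvd_right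
    (Rat.den_intCast_div_natCast_mul_dvd m ha)

theorem Int.not_modEq_of_dvd_sub {n d a b c : ℤ} (hd : d ∣ n) (ha : d ∣ a - c)
    (hb : ¬d ∣ b - c) : ¬a ≡ b [ZMOD n] := fun h =>
  hb (by simpa only [sub_add_sub_cancel] using ((h.of_dvd hd).dvd).add ha)

theorem exists_admissible_of_coprime_mul {A B : ℕ} (hAB : A.Coprime B) (hA : 3 ≤ A)
    (hB : 3 ≤ B) : ∃ t, Admissible (A * B) t := by
  obtain ⟨u, v, huv⟩ := Nat.isCoprime_iff_coprime.mpr hAB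
  have hA2 : ¬(A : ℤ) ∣ 2 := fun h => by have := Int.le_of_dvd two_pos h; omega
  have hB2 : ¬(B : ℤ) ∣ 2 := fun h => by have := Int.le_of_dvd two_pos h; omega
  set t : ℤ := u * A - v * B
  have hAt : (A : ℤ) ∣ t + 1 := ⟨2 * u, by linear_combination -huv⟩
  have hBt : (B : ℤ) ∣ t - 1 := ⟨-2 * v, by linear_combination huv⟩
  have hAN : (A : ℤ) ∣ ((A * B : ℕ) : ℤ) := by push_cast; exact dvd_mul_right _ _
  have hBN : (B : ℤ) ∣ ((A * B : ℕ) : ℤ) := by push_cast; exact dvd_mul_left _ _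
  refine ⟨t, ?_, ?_, ?_, ?_, ?_⟩
  · rw [← Int.isCoprime_iff_gcd_eq_one]
    push_cast
    exact IsCoprime.mul_left ⟨2 * u, -1, by linear_combination huv⟩
      ⟨2 * v, 1, by linear_combination huv⟩
  · exact Int.not_modEq_of_dvd_sub hAN (c := -1) (by simpa using hAt) (by norm_num [hA2])
  · exact Int.not_modEq_of_dvd_sub hBN (c := 1) hBt (by norm_num [hB2])
  · simpa using exists_prime_dvd_coprime_den rfl (by omega) hAB hAt
  · simpa using exists_prime_dvd_coprime_den (mul_comm B A) (by omega) hAB.symm hBt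

theorem admissible_two_mul {A : ℕ} (hA : Odd A) (h5 : 5 ≤ A) :
    Admissible (2 * A) (A + 2) := by
  have h2A : Nat.Coprime 2 A := Nat.coprime_two_left.mpr hA
  obtain ⟨m, rfl⟩ := hA
  have hAN : ((2 * m + 1 : ℕ) : ℤ) ∣ ((2 * (2 * m + 1) : ℕ) : ℤ) := by
    push_cast; exact dvd_mul_left _ _
  have hnot_dvd : ∀ k : ℤ, 0 < k → k < 5 → ¬((2 * m + 1 : ℕ) : ℤ) ∣ k := fun k hk hk5 h => by
    have := Int.le_of_dvd hk h; omega
  refine ⟨?_, ?_, ?_, ?_, ?_⟩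
  · rw [← Int.isCoprime_iff_gcd_eq_one]
    push_cast
    exact IsCoprime.mul_left ⟨m + 2, -1, by ring⟩ ⟨m + 1, -m, by ring⟩
  · exact Int.not_modEq_of_dvd_sub hAN (c := 2) (by simp) (by simpa using hnot_dvd 1)
  · exact Int.not_modEq_of_dvd_sub hAN (c := 2) (by simp) (by simpa using hnot_dvd 3)
  · simpa using exists_prime_dvd_coprime_den rfl one_lt_two h2A
      (a := (2 * m + 1 : ℕ) + 2 + 1) ⟨m + 2, by push_cast; ring⟩
  · simpa using exists_prime_dvd_coprime_den rfl one_lt_two h2A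
      (a := (2 * m + 1 : ℕ) + 2 - 1) ⟨m + 1, by push_cast; ring⟩

theorem three_dvd_and_not_nine_dvd_of_gcd_mem {N : ℕ}
    (hgcd : Nat.gcd 72 N ∈ ({2, 3, 4, 6, 12, 18, 24, 36} : Set ℕ)) (hodd : ¬2 ∣ N) :
    3 ∣ N ∧ ¬9 ∣ N := by
  have hg := Nat.gcd_dvd_right 72 N
  have h9 : 9 ∣ N → 9 ∣ Nat.gcd 72 N := Nat.dvd_gcd (by norm_num)
  simp only [Set.mem_insert_iff, Set.mem_singleton_iff] at hgcd
  rcases hgcd with h | h | h | h | h | h | h | h <;> rw [h] at hg h9 <;> omega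

theorem not_eight_dvd_of_gcd_mem {N : ℕ}
    (hgcd : Nat.gcd 72 N ∈ ({2, 3, 4, 6, 12, 18, 24, 36} : Set ℕ)) (h3 : ¬3 ∣ N) :
    ¬8 ∣ N := by
  have hg := Nat.gcd_dvd_right 72 N
  have h8 : 8 ∣ N → 8 ∣ Nat.gcd 72 N := Nat.dvd_gcd (by norm_num)
  simp only [Set.mem_insert_iff, Set.mem_singleton_iff] at hgcd
  rcases hgcd with h | h | h | h | h | h | h | h <;> rw [h] at hg h8 <;> omega

theorem exists_coprime_mul_or_eq_two_mul {N : ℕ} (hN : 1 < N)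
    (hN' : N ∉ ({2, 3, 4, 6} : Set ℕ))
    (hgcd : Nat.gcd 72 N ∈ ({2, 3, 4, 6, 12, 18, 24, 36} : Set ℕ)) :
    (∃ A B, A.Coprime B ∧ 3 ≤ A ∧ 3 ≤ B ∧ N = A * B) ∨ ∃ A, Odd A ∧ 5 ≤ A ∧ N = 2 * A := by
  simp only [Set.mem_insert_iff, Set.mem_singleton_iff, not_or] at hN'
  obtain ⟨k, M, hM, rfl⟩ := Nat.exists_eq_two_pow_mul_odd (n := N) (by omega)
  have hM2 := Nat.odd_iff.mp hM
  rcases k with _ | _ | k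
  · rw [pow_zero, one_mul] at hN hN' hgcd ⊢
    obtain ⟨⟨B, rfl⟩, h9⟩ := three_dvd_and_not_nine_dvd_of_gcd_mem hgcd (by omega)
    have h3B : Nat.Coprime 3 B :=
      (Nat.Prime.coprime_iff_not_dvd Nat.prime_three).mpr fun h => h9 (by omega)
    exact .inl ⟨3, B, h3B, le_rfl, by omega, rfl⟩
  · exact .inr ⟨M, hM, by omega, by ring⟩
  · rcases eq_or_ne M 1 with rfl | hM1
    · exfalso
      rw [mul_one] at hN' hgcd
      rcases k with _ | k
      · exact hN'.2.2.1 rfl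
      have h3 : ¬3 ∣ 2 ^ (k + 3) := fun h => by
        have := Nat.prime_three.dvd_of_dvd_pow h; omega
      exact not_eight_dvd_of_gcd_mem hgcd h3 (pow_dvd_pow 2 (by omega : 3 ≤ k + 3))
    · refine .inl ⟨2 ^ (k + 2), M, (Nat.coprime_two_left.mpr hM).pow_left _,
        (Nat.pow_le_pow_right two_pos (Nat.le_add_left 2 k)).trans' (by norm_num), ?_, rfl⟩
      omega

/-- Lemma 4.4: if `N > 1`, `N ∉ {2,3,4,6}` and
`gcd(72, N) ∈ {2,3,4,6,12,18,24,36}`, then there is an integer `t` with `gcd(N, t) = 1`,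
`t ≢ ±1 (mod N)`, and prime factors `p₊, p₋` of `N` with `gcd(p₊, N₊) = gcd(p₋, N₋) = 1`,
where `N₊, N₋` are the denominators of `(t+1)/N, (t−1)/N` in lowest terms. -/
theorem stmt7 (N : ℕ) (hN : 1 < N) (hN' : N ∉ ({2, 3, 4, 6} : Set ℕ))
    (hgcd : Nat.gcd 72 N ∈ ({2, 3, 4, 6, 12, 18, 24, 36} : Set ℕ)) :
    ∃ t : ℤ, Int.gcd (N : ℤ) t = 1 ∧
      ¬(t ≡ 1 [ZMOD (N : ℤ)]) ∧ ¬(t ≡ -1 [ZMOD (N : ℤ)]) ∧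
      (∃ p : ℕ, p.Prime ∧ p ∣ N ∧ Nat.Coprime p (((t : ℚ) + 1) / (N : ℚ)).den) ∧
      (∃ p : ℕ, p.Prime ∧ p ∣ N ∧ Nat.Coprime p (((t : ℚ) - 1) / (N : ℚ)).den) := by
  rcases exists_coprime_mul_or_eq_two_mul hN hN' hgcd with
    ⟨A, B, hAB, hA, hB, rfl⟩ | ⟨A, hA, h5, rfl⟩
  · exact exists_admissible_of_coprime_mul hAB hA hB
  · exact ⟨_, admissible_two_mul hA h5⟩
end
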